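/- Let d ≥ 1, α ∈ (0,1) and T > 0. Let h : [0,T] × ℝ^d → ℝ be such that for each s ∈ [0,T] the function h(s, ·) is differentiable with gradient ∇h(s, ·) bounded and α-Hölder, the map s ↦ h(s, ·) is continuous into D𝒞^α, and M := sup_{s ∈ [0,T]} ( |h(s,0)| + ‖∇h(s,·)‖_∞ + [∇h(s,·)]_α ) < ∞. Define v(t,x) = ∫_t^T (P_{s−t} h(s,·))(x) ds. Then for every t ∈ [0,T] the function v(t,·) is differentiable with ∇v(t,·) bounded and α-Hölder, and sup_{t ∈ [0,T]} ( |v(t,0)| + ‖∇v(t,·)‖_∞ + [∇v(t,·)]_α ) ≤ c T M for a constant c depending only on d, α, T. -/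

import Mathlib

open MeasureTheory

/-- The heat kernel `p_t(x) = (2πt)^{-d/2} exp(-‖x‖²/(2t))` on `ℝ^d`. -/
noncomputable def heatKernel (d : ℕ) (t : ℝ) (x : EuclideanSpace ℝ (Fin d)) : ℝ :=
  (2 * Real.pi * t) ^ (-(d : ℝ) / 2) * Real.exp (-‖x‖ ^ 2 / (2 * t))

/-- The heat semigroup `P_t h (x) = ∫ p_t(x-y) h(y) dy` for `t > 0`, with `P_0 h = h`. -/
noncomputable def heatSemigroup (d : ℕ) (t : ℝ) (h : EuclideanSpace ℝ (Fin d) → ℝ)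
    (x : EuclideanSpace ℝ (Fin d)) : ℝ :=
  if t = 0 then h x else ∫ y, heatKernel d t (x - y) * h y

/-- The supremum norm `‖g‖_∞ = ⨆ x, ‖g x‖` of a function. -/
noncomputable def supNorm {E F : Type*} [NormedAddCommGroup F] (g : E → F) : ℝ :=
  ⨆ x, ‖g x‖

/-- The `γ`-Hölder seminorm `[g]_γ = sup_{x ≠ y} ‖g x - g y‖ / ‖x - y‖^γ`. -/
noncomputable def holderSem {E F : Type*} [NormedAddCommGroup E] [NormedAddCommGroup F]
    (γ : ℝ) (g : E → F) : ℝ :=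
  sSup {r : ℝ | ∃ x y : E, x ≠ y ∧ r = ‖g x - g y‖ / ‖x - y‖ ^ γ}

/-!
Substituting `y = x - √τ • w` writes the heat semigroup as an average of translates,
`P_τ f x = ∫ f (x - √τ • w) dγ(w)` against the standard Gaussian `γ`, a formula that also holds
at `τ = 0`. Averages of translates commute with differentiation and do not increase the sup norm
or the `α`-Hölder seminorm of `∇f`, so `∇(P_τ f) = P_τ ∇f` obeys the bounds `M` of `∇f` for every
`τ`, while `|P_τ f 0| ≤ M (1 + √τ ∫ ‖w‖ dγ)`. Continuity of `s ↦ h s` in `D𝒞^α` makes `h` and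
`∇h` jointly continuous in `(s, x)`, which justifies differentiating
`v t = ∫_t^T P_{s-t} (h s) ds` under the integral sign; integrating the bounds over `[t, T]`
gives the constant `c = 3 + √T ∫ ‖w‖ dγ`.
-/

open MeasureTheory Filter Set Topology Function Interval

section Gaussian

variable {d : ℕ}

local notation "E" => EuclideanSpace ℝ (Fin d)

lemma heatKernel_pos {τ : ℝ} (hτ : 0 < τ) (x : E) : 0 < heatKernel d τ x := by
  unfold heatKernel; positivity

@[fun_prop]
lemma continuous_heatKernel (τ : ℝ) : Continuous (heatKernel d τ) := by
  unfold heatKernel; fun_prop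

lemma heatKernel_one_eq (w : E) :
    heatKernel d 1 w = (2 * Real.pi) ^ (-(d : ℝ) / 2) * Real.exp (-(1 / 2) * ‖w‖ ^ 2) := by
  rw [heatKernel, mul_one]; congr 2; ring

lemma integral_heatKernel_one : ∫ w, heatKernel d 1 w = 1 := by
  have h2π : (0 : ℝ) < 2 * Real.pi := by positivity
  simp_rw [heatKernel_one_eq]
  rw [integral_const_mul, GaussianFourier.integral_rexp_neg_mul_sq_norm (by norm_num),
    finrank_euclideanSpace_fin, div_div_eq_mul_div, div_one, mul_comm Real.pi 2, neg_div,
    Real.rpow_neg h2π.le, inv_mul_cancel₀ (by positivity)]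

lemma integrable_heatKernel_one : Integrable (heatKernel d 1) :=
  .of_integral_ne_zero (by rw [integral_heatKernel_one]; exact one_ne_zero)

lemma integrable_heatKernel_one_mul_norm : Integrable fun w : E => heatKernel d 1 w * ‖w‖ := by
  have hgauss : Integrable fun w : E => Real.exp (-(1 / 4) * ‖w‖ ^ 2) := .of_integral_ne_zero <| by
    rw [GaussianFourier.integral_rexp_neg_mul_sq_norm (by norm_num)]; positivity
  refine (hgauss.const_mul ((2 * Real.pi) ^ (-(d : ℝ) / 2))).mono'
    (by fun_prop) (ae_of_all _ fun w => ?_)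
  -- `u ≤ exp (u² / 4)`, since `u ≤ 1 + u² / 4`
  have hnorm : ‖w‖ ≤ Real.exp ((1 / 4) * ‖w‖ ^ 2) := by
    nlinarith [Real.add_one_le_exp ((1 / 4) * ‖w‖ ^ 2), sq_nonneg (‖w‖ - 2)]
  rw [Real.norm_of_nonneg (mul_nonneg (heatKernel_pos one_pos w).le (norm_nonneg w)),
    heatKernel_one_eq, mul_assoc]
  gcongr
  calc Real.exp (-(1 / 2) * ‖w‖ ^ 2) * ‖w‖
      ≤ Real.exp (-(1 / 2) * ‖w‖ ^ 2) * Real.exp ((1 / 4) * ‖w‖ ^ 2) := by gcongr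
    _ = Real.exp (-(1 / 4) * ‖w‖ ^ 2) := by rw [← Real.exp_add]; ring_nf

lemma heatKernel_sqrt_smul {τ : ℝ} (hτ : 0 < τ) (w : E) :
    heatKernel d τ (√τ • w) = τ ^ (-(d : ℝ) / 2) * heatKernel d 1 w := by
  simp only [heatKernel, norm_smul, Real.norm_eq_abs, abs_of_nonneg (Real.sqrt_nonneg τ), mul_pow,
    Real.sq_sqrt hτ.le, mul_one]
  rw [Real.mul_rpow (by positivity) hτ.le]
  field_simp

noncomputable def gaussianMeasure (d : ℕ) : Measure (EuclideanSpace ℝ (Fin d)) :=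
  volume.withDensity fun w => (heatKernel d 1 w).toNNReal

lemma integral_gaussianMeasure {G : Type*} [NormedAddCommGroup G] [NormedSpace ℝ G] (g : E → G) :
    ∫ w, g w ∂gaussianMeasure d = ∫ w, heatKernel d 1 w • g w := by
  rw [gaussianMeasure, integral_withDensity_eq_integral_smul
    (continuous_heatKernel 1).measurable.real_toNNReal]
  congr 1 with w
  rw [NNReal.smul_def, Real.coe_toNNReal _ (heatKernel_pos one_pos w).le]

instance : IsProbabilityMeasure (gaussianMeasure d) := by
  constructor
  rw [gaussianMeasure, withDensity_apply _ MeasurableSet.univ, Measure.restrict_univ]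
  change ∫⁻ w, ENNReal.ofReal (heatKernel d 1 w) = 1
  rw [← ofReal_integral_eq_lintegral_ofReal integrable_heatKernel_one
    (ae_of_all _ fun w => (heatKernel_pos one_pos w).le), integral_heatKernel_one,
    ENNReal.ofReal_one]

lemma integrable_norm_gaussianMeasure : Integrable (fun w : E => ‖w‖) (gaussianMeasure d) := by
  rw [gaussianMeasure, integrable_withDensity_iff_integrable_smul
    (continuous_heatKernel 1).measurable.real_toNNReal]
  refine integrable_heatKernel_one_mul_norm.congr (ae_of_all _ fun w => ?_)
  dsimp only
  rw [NNReal.smul_def, Real.coe_toNNReal _ (heatKernel_pos one_pos w).le, smul_eq_mul]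

lemma heatSemigroup_eq_integral_gaussianMeasure {τ : ℝ} (hτ : 0 ≤ τ) (f : E → ℝ) (x : E) :
    heatSemigroup d τ f x = ∫ w, f (x - √τ • w) ∂gaussianMeasure d := by
  rcases hτ.eq_or_lt with rfl | hτ
  · simp [heatSemigroup]
  rw [heatSemigroup, if_neg hτ.ne', integral_gaussianMeasure]
  have htrans := integral_sub_left_eq_self (μ := (volume : Measure E))
    (fun z => heatKernel d τ z * f (x - z)) x
  have hscale := Measure.integral_comp_smul (μ := (volume : Measure E))
    (fun z => heatKernel d τ z * f (x - z)) √τ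
  simp only [sub_sub_cancel] at htrans
  simp only [heatKernel_sqrt_smul hτ, finrank_euclideanSpace_fin, mul_assoc,
    integral_const_mul] at hscale
  have hpow : √τ ^ d * τ ^ (-(d : ℝ) / 2) = 1 := by
    rw [Real.sqrt_eq_rpow, ← Real.rpow_natCast, ← Real.rpow_mul hτ.le, ← Real.rpow_add hτ]
    ring_nf; exact Real.rpow_zero τ
  rw [← htrans, abs_of_pos (by positivity), smul_eq_mul,
    eq_inv_mul_iff_mul_eq₀ (by positivity)] at hscale
  simp only [smul_eq_mul]
  rw [← hscale, ← mul_assoc, hpow, one_mul]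

end Gaussian

section Regularity

variable {E G : Type*} [NormedAddCommGroup E] [NormedSpace ℝ E] [NormedAddCommGroup G]

lemma norm_le_norm_zero_add_of_norm_fderiv_le [NormedSpace ℝ G] {f : E → G} {M : ℝ}
    (hf : Differentiable ℝ f)
    (hM : ∀ x, ‖fderiv ℝ f x‖ ≤ M) (y : E) : ‖f y‖ ≤ ‖f 0‖ + M * ‖y‖ := by
  have hmvt := convex_univ.norm_image_sub_le_of_norm_fderiv_le (fun x _ => hf x)
    (fun x _ => hM x) (mem_univ 0) (mem_univ y)
  rw [sub_zero] at hmvt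
  calc ‖f y‖ ≤ ‖f 0‖ + ‖f y - f 0‖ := norm_le_insert' _ _
    _ ≤ ‖f 0‖ + M * ‖y‖ := by gcongr

lemma continuous_of_norm_sub_le_mul_rpow {X : Type*} [SeminormedAddCommGroup X] {g : X → G}
    {C α : ℝ} (hα : 0 < α) (hg : ∀ x y, ‖g x - g y‖ ≤ C * ‖x - y‖ ^ α) : Continuous g := by
  refine continuous_iff_continuousAt.2 fun x₀ => tendsto_iff_norm_sub_tendsto_zero.2 ?_
  refine squeeze_zero (fun _ => norm_nonneg _) (fun x => hg x x₀) ?_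
  have hlim : Tendsto (fun x => C * ‖x - x₀‖ ^ α) (𝓝 x₀) (𝓝 (C * ‖x₀ - x₀‖ ^ α)) :=
    ((continuous_id.sub continuous_const).norm.rpow_const fun _ => Or.inr hα.le).tendsto x₀
      |>.const_mul C
  simpa [Real.zero_rpow hα.ne'] using hlim

lemma continuousOn_uncurry_of_norm_sub_le {S Y : Type*} [TopologicalSpace S] [TopologicalSpace Y]
    {g : S → Y → G} {A : Set S} {δ : S → S → ℝ} {ρ : Y → ℝ} (hρ : Continuous ρ)
    (hg : ∀ s ∈ A, Continuous (g s)) (hδ : ∀ s₀ ∈ A, Tendsto (δ s₀) (𝓝[A] s₀) (𝓝 0))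
    (hle : ∀ s₀ ∈ A, ∀ s ∈ A, ∀ y, ‖g s y - g s₀ y‖ ≤ δ s₀ s * ρ y) :
    ContinuousOn (uncurry g) (A ×ˢ univ) := by
  rintro ⟨s₀, y₀⟩ ⟨hs₀, -⟩
  rw [ContinuousWithinAt, nhdsWithin_prod_eq, nhdsWithin_univ, tendsto_iff_norm_sub_tendsto_zero]
  have hlim : Tendsto (fun p : S × Y => δ s₀ p.1 * ρ p.2 + ‖g s₀ p.2 - g s₀ y₀‖)
      (𝓝[A] s₀ ×ˢ 𝓝 y₀) (𝓝 (0 * ρ y₀ + ‖g s₀ y₀ - g s₀ y₀‖)) :=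
    ((hδ s₀ hs₀).comp tendsto_fst).mul ((hρ.tendsto y₀).comp tendsto_snd) |>.add
      ((((hg s₀ hs₀).tendsto y₀).comp tendsto_snd).sub tendsto_const_nhds).norm
  rw [zero_mul, sub_self, norm_zero, add_zero] at hlim
  refine squeeze_zero' (.of_forall fun _ => norm_nonneg _) ?_ hlim
  filter_upwards [prod_mem_prod self_mem_nhdsWithin univ_mem] with p hp
  calc ‖uncurry g p - g s₀ y₀‖ ≤ ‖g p.1 p.2 - g s₀ p.2‖ + ‖g s₀ p.2 - g s₀ y₀‖ :=
        norm_sub_le_norm_sub_add_norm_sub _ _ _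
    _ ≤ _ := by gcongr; exact hle s₀ hs₀ p.1 hp.1 p.2

lemma norm_comp_sub_smul_le {g : E → G} {a b c σ : ℝ} (hb : 0 ≤ b)
    (hgab : ∀ y, ‖g y‖ ≤ a + b * ‖y‖) (hσ : |σ| ≤ c) (x w : E) :
    ‖g (x - σ • w)‖ ≤ a + b * ‖x‖ + b * c * ‖w‖ :=
  calc ‖g (x - σ • w)‖ ≤ a + b * ‖x - σ • w‖ := hgab _
    _ ≤ a + b * (‖x‖ + c * ‖w‖) := by
      gcongr
      refine (norm_sub_le _ _).trans ?_
      rw [norm_smul, Real.norm_eq_abs]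
      gcongr
    _ = a + b * ‖x‖ + b * c * ‖w‖ := by ring

end Regularity

section TranslateAverage

variable {E G : Type*} [NormedAddCommGroup E] [NormedSpace ℝ E] [MeasurableSpace E]
  [NormedAddCommGroup G] {μ : Measure E}

lemma norm_integral_comp_sub_smul_le [NormedSpace ℝ G] [IsProbabilityMeasure μ]
    (hμ : Integrable (fun w => ‖w‖) μ) {g : E → G} {a b : ℝ}
    (hb : 0 ≤ b) (hgab : ∀ y, ‖g y‖ ≤ a + b * ‖y‖) (x : E) (σ : ℝ) :
    ‖∫ w, g (x - σ • w) ∂μ‖ ≤ a + b * (‖x‖ + |σ| * ∫ w, ‖w‖ ∂μ) := by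
  have hbound : Integrable (fun w => a + b * ‖x‖ + b * |σ| * ‖w‖) μ :=
    (integrable_const _).add (hμ.const_mul _)
  calc ‖∫ w, g (x - σ • w) ∂μ‖ ≤ ∫ w, a + b * ‖x‖ + b * |σ| * ‖w‖ ∂μ :=
        norm_integral_le_of_norm_le hbound
          (ae_of_all _ (norm_comp_sub_smul_le hb hgab le_rfl x))
    _ = a + b * (‖x‖ + |σ| * ∫ w, ‖w‖ ∂μ) := by
        rw [integral_add (integrable_const _) (hμ.const_mul _), integral_const_mul]
        simp only [integral_const, probReal_univ, one_smul]
        ring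

variable [BorelSpace E] [SecondCountableTopology E]

lemma integrable_comp_sub_smul [IsFiniteMeasure μ] (hμ : Integrable (fun w => ‖w‖) μ)
    {g : E → G} {a b : ℝ} (hg : Continuous g) (hb : 0 ≤ b) (hgab : ∀ y, ‖g y‖ ≤ a + b * ‖y‖)
    (x : E) (σ : ℝ) : Integrable (fun w => g (x - σ • w)) μ :=
  ((integrable_const (a + b * ‖x‖)).add (hμ.const_mul (b * |σ|))).mono' (by fun_prop)
    (ae_of_all _ (norm_comp_sub_smul_le hb hgab le_rfl x))

lemma integrable_comp_sub_smul_of_norm_le [IsFiniteMeasure μ] {g : E → G} {C : ℝ}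
    (hg : Continuous g) (hC : ∀ y, ‖g y‖ ≤ C) (x : E) (σ : ℝ) :
    Integrable (fun w => g (x - σ • w)) μ :=
  .of_bound (hg.comp_aestronglyMeasurable (by fun_prop)) C (ae_of_all _ fun _ => hC _)

variable [NormedSpace ℝ G]

lemma continuousOn_integral_comp_sub_smul [IsFiniteMeasure μ] (hμ : Integrable (fun w => ‖w‖) μ)
    {S : Type*} [TopologicalSpace S] [FirstCountableTopology S] {g : S → E → G} {σ : S → ℝ}
    {A : Set S} {a b c : ℝ} (hg : ContinuousOn (uncurry g) (A ×ˢ univ)) (hσ : ContinuousOn σ A)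
    (hσc : ∀ s ∈ A, |σ s| ≤ c) (hb : 0 ≤ b) (hgab : ∀ s ∈ A, ∀ y, ‖g s y‖ ≤ a + b * ‖y‖)
    (x : E) : ContinuousOn (fun s => ∫ w, g s (x - σ s • w) ∂μ) A := by
  have hslice : ∀ s ∈ A, Continuous (g s) := fun s hs => continuousOn_univ.1 (hg.uncurry_left s hs)
  refine continuousOn_of_dominated (bound := fun w => a + b * ‖x‖ + b * c * ‖w‖)
    (fun s hs => (hslice s hs).comp_aestronglyMeasurable (by fun_prop))
    (fun s hs => ae_of_all _ (norm_comp_sub_smul_le hb (hgab s hs) (hσc s hs) x))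
    ((integrable_const _).add (hμ.const_mul _)) (ae_of_all _ fun w => ?_)
  exact hg.comp (continuousOn_id.prodMk (continuousOn_const.sub (hσ.smul continuousOn_const)))
      fun s hs => ⟨hs, mem_univ _⟩

lemma hasFDerivAt_integral_comp_sub_smul [IsFiniteMeasure μ] (hμ : Integrable (fun w => ‖w‖) μ)
    {f : E → G} {M : ℝ} (hf : Differentiable ℝ f) (hf' : Continuous (fderiv ℝ f))
    (hM : ∀ x, ‖fderiv ℝ f x‖ ≤ M) (σ : ℝ) (x₀ : E) :
    HasFDerivAt (fun x => ∫ w, f (x - σ • w) ∂μ) (∫ w, fderiv ℝ f (x₀ - σ • w) ∂μ) x₀ := by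
  refine hasFDerivAt_integral_of_dominated_of_fderiv_le (bound := fun _ => M)
    (F' := fun x w => fderiv ℝ f (x - σ • w)) univ_mem
    (.of_forall fun x => hf.continuous.comp_aestronglyMeasurable (by fun_prop))
    (integrable_comp_sub_smul hμ hf.continuous ((norm_nonneg _).trans (hM 0))
      (norm_le_norm_zero_add_of_norm_fderiv_le hf hM) x₀ σ)
    (hf'.comp_aestronglyMeasurable (by fun_prop)) (ae_of_all _ fun w x _ => hM _)
    (integrable_const M) (ae_of_all _ fun w x _ => ?_)
  simpa [Function.comp_def] using
    (hf (x - σ • w)).hasFDerivAt.comp x ((hasFDerivAt_id x).sub_const (σ • w))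

variable [IsProbabilityMeasure μ]

lemma norm_integral_comp_sub_smul_sub_le {g : E → G} {B C α : ℝ} (hg : Continuous g)
    (hB : ∀ y, ‖g y‖ ≤ B) (hC : ∀ y z, ‖g y - g z‖ ≤ C * ‖y - z‖ ^ α) (x y : E) (σ : ℝ) :
    ‖∫ w, g (x - σ • w) ∂μ - ∫ w, g (y - σ • w) ∂μ‖ ≤ C * ‖x - y‖ ^ α := by
  rw [← integral_sub (integrable_comp_sub_smul_of_norm_le hg hB x σ)
    (integrable_comp_sub_smul_of_norm_le hg hB y σ)]
  simpa using norm_integral_le_of_norm_le_const (μ := μ) (ae_of_all _ fun w =>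
    (hC (x - σ • w) (y - σ • w)).trans_eq (by rw [sub_sub_sub_cancel_right]))

end TranslateAverage

section HeatSemigroup

variable {d : ℕ}

local notation "E" => EuclideanSpace ℝ (Fin d)

noncomputable def heatSemigroupFDeriv (d : ℕ) (τ : ℝ) (f : EuclideanSpace ℝ (Fin d) → ℝ)
    (x : EuclideanSpace ℝ (Fin d)) : EuclideanSpace ℝ (Fin d) →L[ℝ] ℝ :=
  ∫ w, fderiv ℝ f (x - √τ • w) ∂gaussianMeasure d

variable {f : EuclideanSpace ℝ (Fin d) → ℝ} {τ M : ℝ}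

lemma hasFDerivAt_heatSemigroup (hτ : 0 ≤ τ) (hf : Differentiable ℝ f)
    (hf' : Continuous (fderiv ℝ f)) (hM : ∀ x, ‖fderiv ℝ f x‖ ≤ M) (x : E) :
    HasFDerivAt (heatSemigroup d τ f) (heatSemigroupFDeriv d τ f x) x := by
  rw [funext (heatSemigroup_eq_integral_gaussianMeasure hτ f)]
  exact hasFDerivAt_integral_comp_sub_smul integrable_norm_gaussianMeasure hf hf' hM √τ x

lemma abs_heatSemigroup_le (hτ : 0 ≤ τ) (hf : Differentiable ℝ f)
    (hM : ∀ x, ‖fderiv ℝ f x‖ ≤ M) (x : E) :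
    |heatSemigroup d τ f x| ≤ |f 0| + M * (‖x‖ + √τ * ∫ w, ‖w‖ ∂gaussianMeasure d) := by
  have hle := norm_integral_comp_sub_smul_le integrable_norm_gaussianMeasure
    ((norm_nonneg _).trans (hM 0)) (norm_le_norm_zero_add_of_norm_fderiv_le hf hM) x √τ
  rwa [abs_of_nonneg (Real.sqrt_nonneg τ), Real.norm_eq_abs, Real.norm_eq_abs,
    ← heatSemigroup_eq_integral_gaussianMeasure hτ] at hle

lemma norm_heatSemigroupFDeriv_le (hM : ∀ x, ‖fderiv ℝ f x‖ ≤ M) (x : E) :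
    ‖heatSemigroupFDeriv d τ f x‖ ≤ M := by
  simpa [heatSemigroupFDeriv] using norm_integral_le_of_norm_le_const (μ := gaussianMeasure d)
    (ae_of_all _ fun w => hM (x - √τ • w))

lemma norm_heatSemigroupFDeriv_sub_le {α : ℝ} (hf' : Continuous (fderiv ℝ f))
    (hM : ∀ x, ‖fderiv ℝ f x‖ ≤ M) (hα : ∀ x y, ‖fderiv ℝ f x - fderiv ℝ f y‖ ≤ M * ‖x - y‖ ^ α)
    (x y : E) :
    ‖heatSemigroupFDeriv d τ f x - heatSemigroupFDeriv d τ f y‖ ≤ M * ‖x - y‖ ^ α :=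
  norm_integral_comp_sub_smul_sub_le hf' hM hα x y √τ

end HeatSemigroup

section SupNormHolderSem

variable {X Y : Type*} [NormedAddCommGroup Y] {g : X → Y} {C γ : ℝ}

lemma supNorm_nonneg (g : X → Y) : 0 ≤ supNorm g :=
  Real.iSup_nonneg fun _ => norm_nonneg _

lemma norm_le_supNorm (hg : ∃ C, ∀ x, ‖g x‖ ≤ C) (x : X) : ‖g x‖ ≤ supNorm g := by
  obtain ⟨C, hC⟩ := hg
  exact le_ciSup ⟨C, by rintro _ ⟨y, rfl⟩; exact hC y⟩ x

lemma supNorm_le (hC : 0 ≤ C) (hg : ∀ x, ‖g x‖ ≤ C) : supNorm g ≤ C :=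
  Real.iSup_le hg hC

variable [NormedAddCommGroup X]

lemma holderSem_nonneg (γ : ℝ) (g : X → Y) : 0 ≤ holderSem γ g :=
  Real.sSup_nonneg <| by rintro _ ⟨x, y, -, rfl⟩; positivity

lemma holderSem_le (hC : 0 ≤ C) (hg : ∀ x y, ‖g x - g y‖ ≤ C * ‖x - y‖ ^ γ) :
    holderSem γ g ≤ C := by
  refine Real.sSup_le ?_ hC
  rintro _ ⟨x, y, hxy, rfl⟩
  rw [div_le_iff₀ (Real.rpow_pos_of_pos (norm_sub_pos_iff.2 hxy) _)]
  exact hg x y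

lemma norm_sub_le_holderSem_mul (hγ : 0 < γ) (hg : ∃ C, ∀ x y, ‖g x - g y‖ ≤ C * ‖x - y‖ ^ γ)
    (x y : X) : ‖g x - g y‖ ≤ holderSem γ g * ‖x - y‖ ^ γ := by
  obtain ⟨C, hC⟩ := hg
  rcases eq_or_ne x y with rfl | hxy
  · simp [Real.zero_rpow hγ.ne']
  have hpos : 0 < ‖x - y‖ ^ γ := Real.rpow_pos_of_pos (norm_sub_pos_iff.2 hxy) _
  have hbdd : BddAbove {r : ℝ | ∃ x y : X, x ≠ y ∧ r = ‖g x - g y‖ / ‖x - y‖ ^ γ} := by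
    refine ⟨C, ?_⟩
    rintro _ ⟨a, b, hab, rfl⟩
    rw [div_le_iff₀ (Real.rpow_pos_of_pos (norm_sub_pos_iff.2 hab) _)]
    exact hC a b
  rw [← div_le_iff₀ hpos]
  exact le_csSup hbdd ⟨x, y, hxy, rfl⟩

end SupNormHolderSem

section UniformC1

variable {F : Type*} [NormedAddCommGroup F] [NormedSpace ℝ F]

structure UniformC1On (h : ℝ → F → ℝ) (A : Set ℝ) (M : ℝ) : Prop where
  abs_apply_zero_le : ∀ s ∈ A, |h s 0| ≤ M
  differentiable : ∀ s ∈ A, Differentiable ℝ (h s)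
  norm_fderiv_le : ∀ s ∈ A, ∀ x, ‖fderiv ℝ (h s) x‖ ≤ M
  continuousOn : ContinuousOn (uncurry h) (A ×ˢ univ)
  continuousOn_fderiv : ContinuousOn (uncurry fun s => fderiv ℝ (h s)) (A ×ˢ univ)

lemma UniformC1On.mono {h : ℝ → F → ℝ} {A B : Set ℝ} {M : ℝ} (hh : UniformC1On h A M)
    (hBA : B ⊆ A) : UniformC1On h B M where
  abs_apply_zero_le s hs := hh.abs_apply_zero_le s (hBA hs)
  differentiable s hs := hh.differentiable s (hBA hs)
  norm_fderiv_le s hs := hh.norm_fderiv_le s (hBA hs)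
  continuousOn := hh.continuousOn.mono (prod_mono hBA subset_rfl)
  continuousOn_fderiv := hh.continuousOn_fderiv.mono (prod_mono hBA subset_rfl)

end UniformC1

section C1Holder

variable {F : Type*} [NormedAddCommGroup F] [InnerProductSpace ℝ F] [CompleteSpace F]

lemma norm_gradient (f : F → ℝ) (x : F) : ‖gradient f x‖ = ‖fderiv ℝ f x‖ :=
  LinearIsometryEquiv.norm_map _ _

lemma norm_gradient_sub_gradient (f g : F → ℝ) (x y : F) :
    ‖gradient f x - gradient g y‖ = ‖fderiv ℝ f x - fderiv ℝ g y‖ := by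
  rw [gradient, gradient, ← map_sub, LinearIsometryEquiv.norm_map]

noncomputable def c1HolderNorm (α : ℝ) (f : F → ℝ) : ℝ :=
  |f 0| + supNorm (gradient f) + holderSem α (gradient f)

noncomputable def c1HolderDist (α : ℝ) (f g : F → ℝ) : ℝ :=
  |f 0 - g 0| + supNorm (fun x => gradient f x - gradient g x)
    + holderSem α (fun x => gradient f x - gradient g x)

variable {f g : F → ℝ} {α M : ℝ}

lemma fderiv_bounds_of_c1HolderNorm_le (hα : 0 < α) (hbdd : ∃ C, ∀ x, ‖gradient f x‖ ≤ C)
    (hhol : ∃ C, ∀ x y, ‖gradient f x - gradient f y‖ ≤ C * ‖x - y‖ ^ α)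
    (hM : c1HolderNorm α f ≤ M) :
    |f 0| ≤ M ∧ (∀ x, ‖fderiv ℝ f x‖ ≤ M) ∧
      ∀ x y, ‖fderiv ℝ f x - fderiv ℝ f y‖ ≤ M * ‖x - y‖ ^ α := by
  unfold c1HolderNorm at hM
  have h0 := abs_nonneg (f 0)
  have hsup := supNorm_nonneg (gradient f)
  have hsem := holderSem_nonneg α (gradient f)
  refine ⟨by linarith, fun x => ?_, fun x y => ?_⟩
  · rw [← norm_gradient]
    linarith [norm_le_supNorm hbdd x]
  · rw [← norm_gradient_sub_gradient]
    refine (norm_sub_le_holderSem_mul hα hhol x y).trans ?_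
    gcongr
    linarith

lemma gradient_bounds_of_fderiv_bounds {A B : ℝ} (hB : 0 ≤ B) (hA : ∀ x, ‖fderiv ℝ f x‖ ≤ A)
    (hhol : ∀ x y, ‖fderiv ℝ f x - fderiv ℝ f y‖ ≤ B * ‖x - y‖ ^ α) :
    (∃ C, ∀ x, ‖gradient f x‖ ≤ C) ∧
      (∃ C, ∀ x y, ‖gradient f x - gradient f y‖ ≤ C * ‖x - y‖ ^ α) ∧
      supNorm (gradient f) ≤ A ∧ holderSem α (gradient f) ≤ B := by
  have hA' : ∀ x, ‖gradient f x‖ ≤ A := fun x => (norm_gradient f x).trans_le (hA x)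
  have hhol' : ∀ x y, ‖gradient f x - gradient f y‖ ≤ B * ‖x - y‖ ^ α := fun x y =>
    (norm_gradient_sub_gradient f f x y).trans_le (hhol x y)
  exact ⟨⟨A, hA'⟩, ⟨B, hhol'⟩, supNorm_le ((norm_nonneg _).trans (hA 0)) hA', holderSem_le hB hhol'⟩

lemma norm_fderiv_sub_fderiv_le_c1HolderDist (hf : ∀ x, ‖fderiv ℝ f x‖ ≤ M)
    (hg : ∀ x, ‖fderiv ℝ g x‖ ≤ M) (y : F) :
    ‖fderiv ℝ f y - fderiv ℝ g y‖ ≤ c1HolderDist α f g := by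
  have hbdd : ∃ C, ∀ x, ‖gradient f x - gradient g x‖ ≤ C :=
    ⟨M + M, fun x => (norm_sub_le _ _).trans <| by
      rw [norm_gradient, norm_gradient]; exact add_le_add (hf x) (hg x)⟩
  rw [← norm_gradient_sub_gradient]
  have := norm_le_supNorm hbdd y
  have := holderSem_nonneg α fun x => gradient f x - gradient g x
  unfold c1HolderDist
  linarith [abs_nonneg (f 0 - g 0)]

lemma abs_sub_le_c1HolderDist_mul (hfd : Differentiable ℝ f) (hgd : Differentiable ℝ g)
    (hf : ∀ x, ‖fderiv ℝ f x‖ ≤ M) (hg : ∀ x, ‖fderiv ℝ g x‖ ≤ M) (y : F) :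
    |f y - g y| ≤ c1HolderDist α f g * (1 + ‖y‖) := by
  have hd : ∀ x, ‖fderiv ℝ (f - g) x‖ ≤ c1HolderDist α f g := fun x => by
    rw [fderiv_sub (hfd x) (hgd x)]
    exact norm_fderiv_sub_fderiv_le_c1HolderDist hf hg x
  have h0 : |f 0 - g 0| ≤ c1HolderDist α f g := by
    unfold c1HolderDist
    linarith [supNorm_nonneg fun x => gradient f x - gradient g x,
      holderSem_nonneg α fun x => gradient f x - gradient g x]
  have := norm_le_norm_zero_add_of_norm_fderiv_le (hfd.sub hgd) hd y
  simp only [Pi.sub_apply, Real.norm_eq_abs] at this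
  linarith

lemma uniformC1On_of_tendsto_c1HolderDist {h : ℝ → F → ℝ} {A : Set ℝ}
    (h0 : ∀ s ∈ A, |h s 0| ≤ M) (hdiff : ∀ s ∈ A, Differentiable ℝ (h s))
    (hM : ∀ s ∈ A, ∀ x, ‖fderiv ℝ (h s) x‖ ≤ M) (hc : ∀ s ∈ A, Continuous (fderiv ℝ (h s)))
    (hcont : ∀ s₀ ∈ A, Tendsto (fun s => c1HolderDist α (h s) (h s₀)) (𝓝[A] s₀) (𝓝 0)) :
    UniformC1On h A M where
  abs_apply_zero_le := h0
  differentiable := hdiff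
  norm_fderiv_le := hM
  continuousOn := continuousOn_uncurry_of_norm_sub_le (ρ := fun y => 1 + ‖y‖) (by fun_prop)
    (fun s hs => (hdiff s hs).continuous) hcont fun s₀ hs₀ s hs y =>
      abs_sub_le_c1HolderDist_mul (hdiff s hs) (hdiff s₀ hs₀) (hM s hs) (hM s₀ hs₀) y
  continuousOn_fderiv := continuousOn_uncurry_of_norm_sub_le (ρ := fun _ => 1) continuous_const
    hc hcont fun s₀ hs₀ s hs y => by
      simpa using norm_fderiv_sub_fderiv_le_c1HolderDist (hM s hs) (hM s₀ hs₀) y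

end C1Holder


lemma abs_sqrt_sub_le_of_mem_Icc {s t T : ℝ} (hs : s ∈ Icc t T) : |√(s - t)| ≤ √(T - t) := by
  rw [abs_of_nonneg (Real.sqrt_nonneg _)]
  exact Real.sqrt_le_sqrt (by linarith [hs.2])

section TimeIntegral

variable {d : ℕ} {h : ℝ → EuclideanSpace ℝ (Fin d) → ℝ} {t T M : ℝ}

lemma continuousOn_heatSemigroup_sub (hh : UniformC1On h (Icc t T) M)
    (x : EuclideanSpace ℝ (Fin d)) :
    ContinuousOn (fun s => heatSemigroup d (s - t) (h s) x) (Icc t T) := by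
  refine (continuousOn_integral_comp_sub_smul integrable_norm_gaussianMeasure hh.continuousOn
    (σ := fun s => √(s - t)) (by fun_prop) (a := M) (fun s hs => abs_sqrt_sub_le_of_mem_Icc hs)
    (abs_nonneg M) (fun s hs y => ?_) x).congr
    fun s hs => heatSemigroup_eq_integral_gaussianMeasure (sub_nonneg.2 hs.1) _ _
  calc ‖h s y‖ ≤ ‖h s 0‖ + M * ‖y‖ :=
        norm_le_norm_zero_add_of_norm_fderiv_le (hh.differentiable s hs) (hh.norm_fderiv_le s hs) y
    _ ≤ M + |M| * ‖y‖ := by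
        gcongr
        · exact hh.abs_apply_zero_le s hs
        · exact le_abs_self M

lemma continuousOn_heatSemigroupFDeriv_sub (hh : UniformC1On h (Icc t T) M)
    (x : EuclideanSpace ℝ (Fin d)) :
    ContinuousOn (fun s => heatSemigroupFDeriv d (s - t) (h s) x) (Icc t T) :=
  continuousOn_integral_comp_sub_smul integrable_norm_gaussianMeasure hh.continuousOn_fderiv
    (σ := fun s => √(s - t)) (by fun_prop) (fun s hs => abs_sqrt_sub_le_of_mem_Icc hs) le_rfl
    (fun s hs y => by simpa using hh.norm_fderiv_le s hs y) x

lemma hasFDerivAt_intervalIntegral_heatSemigroup (htT : t ≤ T) (hh : UniformC1On h (Icc t T) M)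
    (x₀ : EuclideanSpace ℝ (Fin d)) :
    HasFDerivAt (fun x => ∫ s in t..T, heatSemigroup d (s - t) (h s) x)
      (∫ s in t..T, heatSemigroupFDeriv d (s - t) (h s) x₀) x₀ := by
  have hIcc : uIcc t T = Icc t T := uIcc_of_le htT
  have hIoc : ∀ s ∈ Ι t T, s ∈ Icc t T := fun s hs => Ioc_subset_Icc_self (uIoc_of_le htT ▸ hs)
  have hF := fun x => hIcc ▸ continuousOn_heatSemigroup_sub hh x
  have hF' := hIcc ▸ continuousOn_heatSemigroupFDeriv_sub hh x₀
  refine intervalIntegral.hasFDerivAt_integral_of_dominated_of_fderiv_le (bound := fun _ => M)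
    univ_mem (.of_forall fun x => ((hF x).mono uIoc_subset_uIcc).aestronglyMeasurable
      measurableSet_uIoc) (hF x₀).intervalIntegrable
    ((hF'.mono uIoc_subset_uIcc).aestronglyMeasurable measurableSet_uIoc)
    (ae_of_all _ fun s hs x _ => norm_heatSemigroupFDeriv_le (hh.norm_fderiv_le s (hIoc s hs)) x)
    intervalIntegrable_const (ae_of_all _ fun s hs x _ => ?_)
  have hs := hIoc s hs
  exact hasFDerivAt_heatSemigroup (sub_nonneg.2 hs.1) (hh.differentiable s hs)
    (continuousOn_univ.1 (hh.continuousOn_fderiv.uncurry_left s hs)) (hh.norm_fderiv_le s hs) x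

lemma norm_intervalIntegral_heatSemigroupFDeriv_le (htT : t ≤ T)
    (hM : ∀ s ∈ Icc t T, ∀ x, ‖fderiv ℝ (h s) x‖ ≤ M) (x : EuclideanSpace ℝ (Fin d)) :
    ‖∫ s in t..T, heatSemigroupFDeriv d (s - t) (h s) x‖ ≤ M * (T - t) := by
  rw [← abs_of_nonneg (sub_nonneg.2 htT)]
  refine intervalIntegral.norm_integral_le_of_norm_le_const fun s hs => ?_
  exact norm_heatSemigroupFDeriv_le (hM s (Ioc_subset_Icc_self (uIoc_of_le htT ▸ hs))) x

lemma norm_intervalIntegral_heatSemigroupFDeriv_sub_le {α : ℝ} (htT : t ≤ T)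
    (hh : UniformC1On h (Icc t T) M)
    (hhol : ∀ s ∈ Icc t T, ∀ x y, ‖fderiv ℝ (h s) x - fderiv ℝ (h s) y‖ ≤ M * ‖x - y‖ ^ α)
    (x y : EuclideanSpace ℝ (Fin d)) :
    ‖(∫ s in t..T, heatSemigroupFDeriv d (s - t) (h s) x) -
        ∫ s in t..T, heatSemigroupFDeriv d (s - t) (h s) y‖ ≤ M * (T - t) * ‖x - y‖ ^ α := by
  have hint := fun x => ((uIcc_of_le htT).symm ▸
    continuousOn_heatSemigroupFDeriv_sub hh x).intervalIntegrable (μ := volume)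
  rw [← intervalIntegral.integral_sub (hint x) (hint y), ← abs_of_nonneg (sub_nonneg.2 htT),
    mul_right_comm]
  refine intervalIntegral.norm_integral_le_of_norm_le_const fun s hs => ?_
  have hs := Ioc_subset_Icc_self (uIoc_of_le htT ▸ hs)
  exact norm_heatSemigroupFDeriv_sub_le (continuousOn_univ.1
    (hh.continuousOn_fderiv.uncurry_left s hs)) (hh.norm_fderiv_le s hs) (hhol s hs) x y

lemma abs_intervalIntegral_heatSemigroup_zero_le (htT : t ≤ T)
    (hh : UniformC1On h (Icc t T) M) :
    |∫ s in t..T, heatSemigroup d (s - t) (h s) 0|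
      ≤ M * (1 + √(T - t) * ∫ w, ‖w‖ ∂gaussianMeasure d) * (T - t) := by
  have hM : 0 ≤ M := (abs_nonneg _).trans (hh.abs_apply_zero_le t ⟨le_rfl, htT⟩)
  rw [← Real.norm_eq_abs]
  refine (intervalIntegral.norm_integral_le_of_norm_le_const fun s hs => ?_).trans_eq
    (by rw [abs_of_nonneg (sub_nonneg.2 htT)])
  have hs := Ioc_subset_Icc_self (uIoc_of_le htT ▸ hs)
  have hm : 0 ≤ ∫ w, ‖w‖ ∂gaussianMeasure d := integral_nonneg fun _ => norm_nonneg _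
  calc ‖heatSemigroup d (s - t) (h s) 0‖
      ≤ |h s 0| + M * (‖(0 : EuclideanSpace ℝ (Fin d))‖
          + √(s - t) * ∫ w, ‖w‖ ∂gaussianMeasure d) :=
        abs_heatSemigroup_le (sub_nonneg.2 hs.1) (hh.differentiable s hs) (hh.norm_fderiv_le s hs) 0
    _ ≤ M + M * (0 + √(T - t) * ∫ w, ‖w‖ ∂gaussianMeasure d) := by
        rw [norm_zero]
        gcongr
        · exact hh.abs_apply_zero_le s hs
        · linarith [hs.2]
    _ = M * (1 + √(T - t) * ∫ w, ‖w‖ ∂gaussianMeasure d) := by ring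

end TimeIntegral

theorem stmt_8_general (d : ℕ) (α : ℝ) (hα : α ∈ Set.Ioo (0 : ℝ) 1)
    (T : ℝ) :
    ∃ c : ℝ, 0 < c ∧
      ∀ (h : ℝ → EuclideanSpace ℝ (Fin d) → ℝ) (M : ℝ),
        (∀ s ∈ Set.Icc (0 : ℝ) T, Differentiable ℝ (h s)) →
        (∀ s ∈ Set.Icc (0 : ℝ) T, (∃ C, ∀ x, ‖gradient (h s) x‖ ≤ C) ∧
            (∃ C, ∀ x y, ‖gradient (h s) x - gradient (h s) y‖ ≤ C * ‖x - y‖ ^ α)) →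
        (∀ s₀ ∈ Set.Icc (0 : ℝ) T, Filter.Tendsto
          (fun s => |h s 0 - h s₀ 0|
            + supNorm (fun x => gradient (h s) x - gradient (h s₀) x)
            + holderSem α (fun x => gradient (h s) x - gradient (h s₀) x))
          (nhdsWithin s₀ (Set.Icc (0 : ℝ) T)) (nhds 0)) →
        (∀ s ∈ Set.Icc (0 : ℝ) T,
          |h s 0| + supNorm (gradient (h s)) + holderSem α (gradient (h s)) ≤ M) →
        ∀ v : ℝ → EuclideanSpace ℝ (Fin d) → ℝ,
          (∀ t x, v t x = ∫ s in t..T, heatSemigroup d (s - t) (h s) x) →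
          ∀ t ∈ Set.Icc (0 : ℝ) T,
            Differentiable ℝ (v t) ∧
            (∃ C, ∀ x, ‖gradient (v t) x‖ ≤ C) ∧
            (∃ C, ∀ x y, ‖gradient (v t) x - gradient (v t) y‖ ≤ C * ‖x - y‖ ^ α) ∧
            |v t 0| + supNorm (gradient (v t)) + holderSem α (gradient (v t))
              ≤ c * T * M := by
  set m := ∫ w, ‖w‖ ∂gaussianMeasure d
  have hm : 0 ≤ m := integral_nonneg fun _ => norm_nonneg _
  refine ⟨3 + √T * m, by positivity, fun h M hdiff hbnd hcont hM v hv t ht => ?_⟩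
  have hreg := fun s hs =>
    fderiv_bounds_of_c1HolderNorm_le hα.1 (hbnd s hs).1 (hbnd s hs).2 (hM s hs)
  have hh : UniformC1On h (Icc t T) M := (uniformC1On_of_tendsto_c1HolderDist
    (fun s hs => (hreg s hs).1) hdiff (fun s hs => (hreg s hs).2.1)
    (fun s hs => continuous_of_norm_sub_le_mul_rpow hα.1 (hreg s hs).2.2) hcont).mono
    (Icc_subset_Icc_left ht.1)
  have hM0 : 0 ≤ M := (abs_nonneg _).trans (hh.abs_apply_zero_le t ⟨le_rfl, ht.2⟩)
  have hD := hasFDerivAt_intervalIntegral_heatSemigroup ht.2 hh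
  rw [show v t = _ from funext (hv t)]
  obtain ⟨hgrad, hhol, hsup, hsem⟩ := gradient_bounds_of_fderiv_bounds
    (mul_nonneg hM0 (sub_nonneg.2 ht.2))
    (fun x => (hD x).fderiv ▸ norm_intervalIntegral_heatSemigroupFDeriv_le ht.2 hh.norm_fderiv_le x)
    (fun x y => (hD x).fderiv ▸ (hD y).fderiv ▸ norm_intervalIntegral_heatSemigroupFDeriv_sub_le
      ht.2 hh (fun s hs => (hreg s (Icc_subset_Icc_left ht.1 hs)).2.2) x y)
  refine ⟨fun x => (hD x).differentiableAt, hgrad, hhol, ?_⟩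
  have hval := abs_intervalIntegral_heatSemigroup_zero_le ht.2 hh
  have hsqrt : √(T - t) ≤ √T := Real.sqrt_le_sqrt (by linarith [ht.1])
  calc _ ≤ M * (1 + √(T - t) * m) * (T - t) + M * (T - t) + M * (T - t) := by gcongr
    _ ≤ M * (1 + √T * m) * T + M * T + M * T := by
        gcongr <;> linarith [ht.1, ht.2]
    _ = (3 + √T * m) * T * M := by ring

/-- There is a constant `c > 0` (depending only on `d`, `α`, `T`) such that
for every map `h : [0,T] → D𝒞^α`, continuous in the `D𝒞^α` norm and with
`sup_{s ∈ [0,T]} ‖h(s,·)‖_{D𝒞^α} ≤ M`, the function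
`v(t,x) = ∫_t^T (P_{s−t} h(s,·))(x) ds` satisfies `v(t,·) ∈ D𝒞^α` for every
`t ∈ [0,T]` and `sup_{t ∈ [0,T]} ‖v(t,·)‖_{D𝒞^α} ≤ c T M`. -/
theorem stmt_8 (d : ℕ) (hd : 1 ≤ d) (α : ℝ) (hα : α ∈ Set.Ioo (0 : ℝ) 1)
    (T : ℝ) (hT : 0 < T) :
    ∃ c : ℝ, 0 < c ∧
      ∀ (h : ℝ → EuclideanSpace ℝ (Fin d) → ℝ) (M : ℝ),
        (∀ s ∈ Set.Icc (0 : ℝ) T, Differentiable ℝ (h s)) →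
        (∀ s ∈ Set.Icc (0 : ℝ) T, (∃ C, ∀ x, ‖gradient (h s) x‖ ≤ C) ∧
            (∃ C, ∀ x y, ‖gradient (h s) x - gradient (h s) y‖ ≤ C * ‖x - y‖ ^ α)) →
        (∀ s₀ ∈ Set.Icc (0 : ℝ) T, Filter.Tendsto
          (fun s => |h s 0 - h s₀ 0|
            + supNorm (fun x => gradient (h s) x - gradient (h s₀) x)
            + holderSem α (fun x => gradient (h s) x - gradient (h s₀) x))
          (nhdsWithin s₀ (Set.Icc (0 : ℝ) T)) (nhds 0)) →
        (∀ s ∈ Set.Icc (0 : ℝ) T,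
          |h s 0| + supNorm (gradient (h s)) + holderSem α (gradient (h s)) ≤ M) →
        ∀ v : ℝ → EuclideanSpace ℝ (Fin d) → ℝ,
          (∀ t x, v t x = ∫ s in t..T, heatSemigroup d (s - t) (h s) x) →
          ∀ t ∈ Set.Icc (0 : ℝ) T,
            Differentiable ℝ (v t) ∧
            (∃ C, ∀ x, ‖gradient (v t) x‖ ≤ C) ∧
            (∃ C, ∀ x y, ‖gradient (v t) x - gradient (v t) y‖ ≤ C * ‖x - y‖ ^ α) ∧
            |v t 0| + supNorm (gradient (v t)) + holderSem α (gradient (v t))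
              ≤ c * T * M :=
  stmt_8_general d α hα T
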